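/- arXiv:1604.05757 — 3 statements merged into one kernel-verified Lean document; each statement's English description precedes it below -/
import Mathlib

section
/- Let r ≥ 3. For every n ≥ 1, ω_r^DHJ(n) ≤ ω_{Q̄_r}(n), i.e., the maximum measure of a combinatorial-line-free subset of [r]^n is at most the maximum of val(G^n) over all non-trivial games G with question set Q̄_r. -/
/-- The value of an `r`-prover game: the question set is `Qbar`, a finite set of
question tuples; `V` is the verification predicate; the value is the maximum over
strategies (one function `Q j → A j` per prover) of the probability, over a uniformly
random question tuple from `Qbar`, that the verifier accepts. -/
noncomputable def gameValue {r : ℕ} {Q A : Fin r → Type}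
    (Qbar : Finset (∀ j, Q j)) (V : (∀ j, Q j) → (∀ j, A j) → Bool) : ℝ :=
  sSup { x : ℝ | ∃ S : ∀ j, Q j → A j,
    x = ((Qbar.filter fun q => V q (fun j => S j (q j)) = true).card : ℝ) / (Qbar.card : ℝ) }

/-- The value of the `n`-fold parallel repetition of a game: questions are `n`-tuples
of question tuples sampled independently and uniformly from `Qbar`, each prover `j`
sees only its own vector of questions, and the verifier accepts iff `V` accepts in
every coordinate. -/
noncomputable def repValue {r : ℕ} {Q A : Fin r → Type} [∀ j, DecidableEq (Q j)]
    (n : ℕ) (Qbar : Finset (∀ j, Q j)) (V : (∀ j, Q j) → (∀ j, A j) → Bool) : ℝ :=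
  sSup { x : ℝ | ∃ S : ∀ j, (Fin n → Q j) → (Fin n → A j),
    x = (((Fintype.piFinset fun _ : Fin n => Qbar).filter fun q =>
          ∀ i, V (q i) (fun j => S j (fun i' => q i' j) i) = true).card : ℝ) /
        ((Fintype.piFinset fun _ : Fin n => Qbar).card : ℝ) }
/-- `ω_Q̄(n)`: the supremum of `val(Gⁿ)` over all non-trivial games `G` with question
set `Qbar` (quantifying over all finite nonempty answer alphabets and all verifiers). -/
noncomputable def omegaQ {r : ℕ} {Q : Fin r → Type} [∀ j, DecidableEq (Q j)]
    (Qbar : Finset (∀ j, Q j)) (n : ℕ) : ℝ :=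
  sSup { x : ℝ | ∃ (A : Fin r → Type) (_ : ∀ j, Fintype (A j)) (_ : ∀ j, Nonempty (A j))
    (V : (∀ j, Q j) → (∀ j, A j) → Bool),
      gameValue Qbar V ≠ 1 ∧ x = repValue n Qbar V }
/-- The question set `Q̄_r ⊆ {0,1}^r`: tuples with exactly one coordinate equal to 1. -/
def QbarR (r : ℕ) : Finset (Fin r → Bool) :=
  Finset.univ.filter fun q => (Finset.univ.filter fun j => q j = true).card = 1
/-- The point of a combinatorial pattern `b` (wildcard = `none`) at `q`. -/
def patternLine {r n : ℕ} (b : Fin n → Option (Fin r)) (q : Fin r) : Fin n → Fin r :=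
  fun i => (b i).getD q

/-- `S ⊆ [r]^n` contains a combinatorial line: there is a pattern `b` (with at least one
wildcard) all of whose substitution instances lie in `S`. -/
def HasCombLine {r n : ℕ} (S : Set (Fin n → Fin r)) : Prop :=
  ∃ b : Fin n → Option (Fin r), (∃ i, b i = none) ∧ ∀ q : Fin r, patternLine b q ∈ S

/-- `ω_r^DHJ(n)`: the supremum of the measures `|S|/rⁿ` of subsets `S ⊆ [r]^n`
containing no combinatorial line. -/
noncomputable def omegaDHJ (r n : ℕ) : ℝ :=
  sSup { x : ℝ | ∃ S : Finset (Fin n → Fin r),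
    ¬ HasCombLine (↑S : Set (Fin n → Fin r)) ∧ x = (S.card : ℝ) / (r : ℝ) ^ n }

/-!
A line-free set `S ⊆ [r]ⁿ` yields a game on `Q̄_r` in which prover `j` answers a coordinate
together with a guess for the fibre `{i | p i = j}` of a hidden point `p ∈ S`; the verifier accepts
when all coordinates agree, the fibres are those of a point of `S`, and the prover that received
the bit `1` put the coordinate into its own fibre. In the `n`-fold repetition the provers can answer
honestly on every question tuple that encodes a point of `S`, so the repeated value is at least
`|S| / rⁿ`. A strategy winning the single game on all `r` questions would instead produce points
`p₀, …, p_{r-1} ∈ S` such that in every coordinate `c ↦ p_c i` is constant or the identity, and the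
common answered coordinate is of the second kind: a combinatorial line in `S`.
-/

open Finset

section GameValue

variable {r : ℕ} {Q A : Fin r → Type}

theorem repValue_le_one [∀ j, DecidableEq (Q j)] (n : ℕ) (Qbar : Finset (∀ j, Q j))
    (V : (∀ j, Q j) → (∀ j, A j) → Bool) : repValue n Qbar V ≤ 1 := by
  refine Real.sSup_le ?_ zero_le_one
  rintro _ ⟨S, rfl⟩
  exact div_le_one_of_le₀ (by exact_mod_cast card_filter_le _ _) (Nat.cast_nonneg _)

theorem le_repValue [∀ j, DecidableEq (Q j)] {n : ℕ} {Qbar : Finset (∀ j, Q j)}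
    {V : (∀ j, Q j) → (∀ j, A j) → Bool} (S : ∀ j, (Fin n → Q j) → (Fin n → A j)) :
    (((Fintype.piFinset fun _ : Fin n => Qbar).filter fun q =>
          ∀ i, V (q i) (fun j => S j (fun i' => q i' j) i) = true).card : ℝ) /
        ((Fintype.piFinset fun _ : Fin n => Qbar).card : ℝ) ≤ repValue n Qbar V := by
  refine le_csSup ⟨1, ?_⟩ ⟨S, rfl⟩
  rintro _ ⟨S', rfl⟩
  exact div_le_one_of_le₀ (by exact_mod_cast card_filter_le _ _) (Nat.cast_nonneg _)

theorem repValue_le_omegaQ [∀ j, DecidableEq (Q j)] {n : ℕ} {Qbar : Finset (∀ j, Q j)}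
    [∀ j, Fintype (A j)] [∀ j, Nonempty (A j)] {V : (∀ j, Q j) → (∀ j, A j) → Bool}
    (hV : gameValue Qbar V ≠ 1) : repValue n Qbar V ≤ omegaQ Qbar n := by
  refine le_csSup ⟨1, ?_⟩ ⟨A, inferInstance, inferInstance, V, hV, rfl⟩
  rintro _ ⟨A', _, _, V', _, rfl⟩
  exact repValue_le_one n Qbar V'

theorem gameValue_lt_one_of_forall_exists_reject {Qbar : Finset (∀ j, Q j)}
    {V : (∀ j, Q j) → (∀ j, A j) → Bool} (hQ : Qbar.Nonempty)
    (hrej : ∀ S : ∀ j, Q j → A j, ∃ q ∈ Qbar, V q (fun j => S j (q j)) = false) :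
    gameValue Qbar V < 1 := by
  have hone : (1 : ℝ) ≤ Qbar.card := by exact_mod_cast hQ.card_pos
  have hbound : gameValue Qbar V ≤ (Qbar.card - 1) / Qbar.card := by
    refine Real.sSup_le ?_ (div_nonneg (by linarith) (by linarith))
    rintro _ ⟨S, rfl⟩
    obtain ⟨q, hq, hfalse⟩ := hrej S
    have hlt : (Qbar.filter fun q => V q (fun j => S j (q j)) = true).card < Qbar.card :=
      card_lt_card (filter_ssubset.2 ⟨q, hq, by simp [hfalse]⟩)
    gcongr
    rw [le_sub_iff_add_le]
    exact_mod_cast hlt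
  calc gameValue Qbar V ≤ (Qbar.card - 1) / Qbar.card := hbound
    _ < 1 := by rw [div_lt_one (by linarith)]; linarith

end GameValue

section QbarR

variable {r : ℕ}

def oneHot (c : Fin r) : Fin r → Bool := fun j => decide (c = j)

@[simp] theorem oneHot_self (c : Fin r) : oneHot c c = true := by simp [oneHot]

theorem oneHot_of_ne {c j : Fin r} (h : j ≠ c) : oneHot c j = false := by
  simp [oneHot, Ne.symm h]

theorem oneHot_injective : Function.Injective (oneHot (r := r)) := fun c c' h => by
  simpa [oneHot] using congrFun h c'

theorem mem_QbarR_iff {q : Fin r → Bool} : q ∈ QbarR r ↔ ∃ c, oneHot c = q := by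
  simp only [QbarR, mem_filter, mem_univ, true_and, card_eq_one, Finset.ext_iff,
    mem_singleton, funext_iff, oneHot]
  refine exists_congr fun c => forall_congr' fun j => ?_
  cases q j <;> simp [eq_comm]

theorem card_QbarR : (QbarR r).card = r := by
  have : QbarR r = univ.map ⟨oneHot, oneHot_injective⟩ := by
    ext q
    simp [mem_QbarR_iff]
  simp [this]

end QbarR

section Lines

variable {r n : ℕ}

theorem hasCombLine_of_forall_eq_self_or_const {S : Set (Fin n → Fin r)}
    (p : Fin r → Fin n → Fin r) (hpS : ∀ c, p c ∈ S) (hdiag : ∃ i, ∀ c, p c i = c)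
    (hcoord : ∀ i, (∀ c, p c i = c) ∨ ∃ a, ∀ c, p c i = a) : HasCombLine S := by
  classical
  let b : Fin n → Option (Fin r) := fun i =>
    if h : ∀ c, p c i = c then none else some ((hcoord i).resolve_left h).choose
  have hline : ∀ c, patternLine b c = p c := fun c => funext fun i => by
    simp only [patternLine, b]
    split_ifs with h
    · exact (h c).symm
    · exact (((hcoord i).resolve_left h).choose_spec c).symm
  obtain ⟨i, hi⟩ := hdiag
  exact ⟨b, ⟨i, dif_pos hi⟩, fun c => hline c ▸ hpS c⟩

end Lines

section WinningStrategy

/-! `T` is a strategy for the single game and `p c` the point of `S` witnessing its acceptance on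
the question `oneHot c`. Prover `j` *claims* the coordinate `i` when its answer to the bit `0`
puts `i` into its fibre. -/

variable {r n : ℕ} {T : Fin r → Bool → Fin n × (Fin n → Bool)} {p : Fin r → Fin n → Fin r}

theorem exists_forall_eq_self (hr : 3 ≤ r)
    (htrue : ∀ c, (T c true).2 = fun i => decide (p c i = c))
    (hidx : ∀ c j, j ≠ c → (T j false).1 = (T c true).1)
    (hpin : ∀ c, (T c true).2 (T c true).1 = true) : ∃ i, ∀ c, p c i = c := by
  have hsame : ∀ c c', (T c true).1 = (T c' true).1 := fun c c' => by
    obtain ⟨k, hkc, hkc'⟩ := Fin.exists_ne_and_ne_of_two_lt c c' hr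
    rw [← hidx c k hkc, hidx c' k hkc']
  refine ⟨(T ⟨0, by omega⟩ true).1, fun c => ?_⟩
  have := hpin c
  rw [hsame c ⟨0, by omega⟩, htrue c] at this
  simpa using this

variable (hfalse : ∀ c j, j ≠ c → (T j false).2 = fun i => decide (p c i = j))
include hfalse

theorem eq_of_claim_of_ne {i : Fin n} {j c : Fin r} (hj : (T j false).2 i = true) (hc : c ≠ j) :
    p c i = j := by
  simpa [hj] using (congrFun (hfalse c j hc.symm) i).symm

theorem eq_of_claim (hr : 3 ≤ r) {i : Fin n} {j : Fin r} (hj : (T j false).2 i = true)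
    (c : Fin r) : p c i = j := by
  by_cases hc : c = j
  · subst hc
    by_contra hm
    -- `p c i` would claim `i` as well, and any third point is then pinned to both claimants
    have hm' : (T (p c i) false).2 i = true := by simp [hfalse c (p c i) hm]
    obtain ⟨c', hc', hcm⟩ := Fin.exists_ne_and_ne_of_two_lt c (p c i) hr
    exact hm ((eq_of_claim_of_ne hfalse hm' hcm).symm.trans (eq_of_claim_of_ne hfalse hj hc'))
  · exact eq_of_claim_of_ne hfalse hj hc

theorem eq_self_of_forall_not_claim {i : Fin n} (h : ∀ j, (T j false).2 i = false) (c : Fin r) :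
    p c i = c := by
  by_contra hm
  simpa [h] using congrFun (hfalse c (p c i) hm) i

theorem forall_eq_self_or_const (hr : 3 ≤ r) (i : Fin n) :
    (∀ c, p c i = c) ∨ ∃ a, ∀ c, p c i = a := by
  by_cases h : ∃ j, (T j false).2 i = true
  · obtain ⟨j, hj⟩ := h
    exact Or.inr ⟨j, eq_of_claim hfalse hr hj⟩
  · exact Or.inl (eq_self_of_forall_not_claim hfalse fun j => by simpa using not_exists.1 h j)

end WinningStrategy

section LineGame

variable {r n : ℕ}

def lineGame (S : Finset (Fin n → Fin r)) (q : Fin r → Bool)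
    (a : Fin r → Fin n × (Fin n → Bool)) : Bool :=
  decide ((∀ j k, (a j).1 = (a k).1) ∧
    (∃ p ∈ S, ∀ j, (a j).2 = fun i => decide (p i = j)) ∧
    ∀ j, q j = true → (a j).2 (a j).1 = true)

theorem exists_reject_lineGame (hr : 3 ≤ r) {S : Finset (Fin n → Fin r)}
    (hS : ¬ HasCombLine (S : Set (Fin n → Fin r))) (T : Fin r → Bool → Fin n × (Fin n → Bool)) :
    ∃ q ∈ QbarR r, lineGame S q (fun j => T j (q j)) = false := by
  by_contra! hwin
  have hacc : ∀ c, lineGame S (oneHot c) (fun j => T j (oneHot c j)) = true := fun c => by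
    simpa using hwin (oneHot c) (mem_QbarR_iff.2 ⟨c, rfl⟩)
  simp only [lineGame, decide_eq_true_eq] at hacc
  choose p hpS hfib using fun c => (hacc c).2.1
  have hfalse : ∀ c j, j ≠ c → (T j false).2 = fun i => decide (p c i = j) := fun c j h => by
    simpa [oneHot_of_ne h] using hfib c j
  have htrue : ∀ c, (T c true).2 = fun i => decide (p c i = c) := fun c => by
    simpa using hfib c c
  have hidx : ∀ c j, j ≠ c → (T j false).1 = (T c true).1 := fun c j h => by
    simpa [oneHot_of_ne h] using (hacc c).1 j c
  have hpin : ∀ c, (T c true).2 (T c true).1 = true := fun c => by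
    simpa using (hacc c).2.2 c (oneHot_self c)
  exact hS (hasCombLine_of_forall_eq_self_or_const p (fun c => mem_coe.2 (hpS c))
    (exists_forall_eq_self hr htrue hidx hpin) (forall_eq_self_or_const hfalse hr))

theorem gameValue_lineGame_ne_one (hr : 3 ≤ r) {S : Finset (Fin n → Fin r)}
    (hS : ¬ HasCombLine (S : Set (Fin n → Fin r))) : gameValue (QbarR r) (lineGame S) ≠ 1 :=
  (gameValue_lt_one_of_forall_exists_reject ⟨_, mem_QbarR_iff.2 ⟨⟨0, by omega⟩, rfl⟩⟩
    (exists_reject_lineGame hr hS)).ne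

def honestStrategy (r n : ℕ) : Fin r → (Fin n → Bool) → Fin n → Fin n × (Fin n → Bool) :=
  fun _ x i => (i, x)

theorem card_div_pow_le_repValue_lineGame (S : Finset (Fin n → Fin r)) :
    (S.card : ℝ) / (r : ℝ) ^ n ≤ repValue n (QbarR r) (lineGame S) := by
  have hinj : Function.Injective fun (p : Fin n → Fin r) i => oneHot (p i) :=
    fun p p' h => funext fun i => oneHot_injective (congrFun h i)
  have hsub : S.image (fun p i => oneHot (p i)) ⊆
      (Fintype.piFinset fun _ : Fin n => QbarR r).filter fun q =>
        ∀ i, lineGame S (q i) (fun j => honestStrategy r n j (fun i' => q i' j) i) = true := by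
    rintro _ hq
    obtain ⟨p, hp, rfl⟩ := mem_image.1 hq
    refine mem_filter.2 ⟨Fintype.mem_piFinset.2 fun i => mem_QbarR_iff.2 ⟨p i, rfl⟩, fun i => ?_⟩
    exact decide_eq_true ⟨fun _ _ => rfl, ⟨p, hp, fun _ => rfl⟩, fun _ h => h⟩
  calc (S.card : ℝ) / (r : ℝ) ^ n
      = ((S.image fun p i => oneHot (p i)).card : ℝ) /
          ((Fintype.piFinset fun _ : Fin n => QbarR r).card : ℝ) := by
        simp [card_image_of_injective _ hinj, Fintype.card_piFinset, card_QbarR]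
    _ ≤ _ := by gcongr
    _ ≤ _ := le_repValue (honestStrategy r n)

end LineGame

/-- For `r ≥ 3` and `n ≥ 1`, `ω_r^DHJ(n) ≤ ω_{Q̄_r}(n)`. -/
theorem statement1 (r : ℕ) (hr : 3 ≤ r) (n : ℕ) (hn : 1 ≤ n) :
    omegaDHJ r n ≤ omegaQ (QbarR r) n := by
  have : NeZero n := ⟨by omega⟩
  have hempty : ¬ HasCombLine (↑(∅ : Finset (Fin n → Fin r)) : Set (Fin n → Fin r)) :=
    fun ⟨_, _, h⟩ => by simpa using h ⟨0, by omega⟩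
  refine csSup_le ⟨0, ∅, hempty, by simp⟩ ?_
  rintro _ ⟨S, hS, rfl⟩
  calc (S.card : ℝ) / (r : ℝ) ^ n ≤ repValue n (QbarR r) (lineGame S) :=
        card_div_pow_le_repValue_lineGame S
    _ ≤ omegaQ (QbarR r) n := repValue_le_omegaQ (gameValue_lineGame_ne_one hr hS)
end

section
/- Let Q̄ be an r-prover question set, let C ≥ 1 and ε > 0, and let ℋ be a probability distribution over Hom(Q̄,Q̄) such that ℋ(Id) ≥ ε and such that, when f = (f_1,…,f_n) is sampled with each f_i i.i.d. from ℋ, for every S ⊆ Q̄^n one has Pr[∀ q̄ ∈ Q̄ : (f_1(q̄),…,f_n(q̄)) ∈ S] ≥ μ(S)^C / C, where μ(S) = |S|/|Q̄|^n. Then for every n, ω^good_Q̄(n) ≤ 3·exp(−εn/C). -/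
/-- `f` is a homomorphism of the question set `Qbar` (a tuple of maps, one per
prover, sending every hyperedge of `Qbar` to a hyperedge of `Qbar`). -/
def QHom {r : ℕ} {Q : Fin r → Type} (Qbar : Finset (∀ j, Q j))
    (f : ∀ j, Q j → Q j) : Prop :=
  ∀ q ∈ Qbar, (fun j => f j (q j)) ∈ Qbar

/-- A vector `f = (f_1, …, f_n)` of homomorphisms of `Qbar` is good for
`S ⊆ Q̄ⁿ` if the image of every hyperedge under `f` lies in `S` and some `f i`
is the identity. -/
def GoodFor {r : ℕ} {Q : Fin r → Type} (Qbar : Finset (∀ j, Q j)) {n : ℕ}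
    (S : Finset (Fin n → ∀ j, Q j)) (f : Fin n → ∀ j, Q j → Q j) : Prop :=
  (∀ i, QHom Qbar (f i)) ∧ (∃ i, ∀ j, f i j = id) ∧
    ∀ q ∈ Qbar, (fun i j => f i j (q j)) ∈ S

/-- `Qbar` is `(n, ε)`-good: every `S ⊆ Q̄ⁿ` with `μ(S) = |S|/|Q̄|ⁿ ≥ ε` admits a
good vector of homomorphisms. -/
def IsGood {r : ℕ} {Q : Fin r → Type} [∀ j, Fintype (Q j)] [∀ j, DecidableEq (Q j)]
    (Qbar : Finset (∀ j, Q j)) (n : ℕ) (ε : ℝ) : Prop :=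
  ∀ S : Finset (Fin n → ∀ j, Q j), S ⊆ Fintype.piFinset (fun _ => Qbar) →
    ε ≤ (S.card : ℝ) / (Qbar.card : ℝ) ^ n →
    ∃ f : Fin n → ∀ j, Q j → Q j, GoodFor Qbar S f

/-- `ω^good_Q̄(n) = inf {ε : Q̄ is (n,ε)-good}`. -/
noncomputable def omegaGood {r : ℕ} {Q : Fin r → Type} [∀ j, Fintype (Q j)]
    [∀ j, DecidableEq (Q j)] (Qbar : Finset (∀ j, Q j)) (n : ℕ) : ℝ :=
  sInf { ε : ℝ | IsGood Qbar n ε }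

/-- The finite set `Hom(Q̄, Q̄)` of homomorphisms of the question set `Qbar`. -/
def homFinset {r : ℕ} {Q : Fin r → Type} [∀ j, Fintype (Q j)] [∀ j, DecidableEq (Q j)]
    (Qbar : Finset (∀ j, Q j)) : Finset (∀ j, Q j → Q j) :=
  Finset.univ.filter fun f => ∀ q ∈ Qbar, (fun j => f j (q j)) ∈ Qbar

/-!
Sample `F = (F_1, …, F_n)` i.i.d. from `H`. By same-set hitting, `F` maps every hyperedge into
`S` with probability at least `μ(S)^C / C`, which for `μ(S) ≥ 3·exp(-εn/C)` is at least
`3^C·exp(-εn) / C > exp(-εn)`, while no `F_i` is the identity with probability only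
`(1 - H(Id))^n ≤ exp(-εn)`. Hence some hitting `F` has an identity coordinate and is good for `S`.
-/

open Finset Real

theorem exists_mem_exists_eq_of_one_sub_pow_lt {α : Type*} [DecidableEq α] {n : ℕ}
    {s : Finset α} {w : α → ℝ} (hw : ∀ x ∈ s, 0 ≤ w x) (hsum : ∑ x ∈ s, w x = 1)
    {a : α} (ha : a ∈ s) {T : Finset (Fin n → α)} (hT : T ⊆ Fintype.piFinset fun _ => s)
    (hlt : (1 - w a) ^ n < ∑ F ∈ T, ∏ i, w (F i)) :
    ∃ F ∈ T, ∃ i, F i = a := by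
  by_contra! havoid
  have hsub : T ⊆ Fintype.piFinset fun _ => s.erase a := fun F hF =>
    Fintype.mem_piFinset.2 fun i => mem_erase.2 ⟨havoid F hF i, Fintype.mem_piFinset.1 (hT hF) i⟩
  have hle : ∑ F ∈ T, ∏ i, w (F i) ≤ (∑ x ∈ s.erase a, w x) ^ n := by
    rw [sum_pow']
    exact sum_le_sum_of_subset_of_nonneg hsub fun F hF _ =>
      prod_nonneg fun i _ => hw _ (mem_of_mem_erase (Fintype.mem_piFinset.1 hF i))
  rw [sum_erase_eq_sub ha, hsum] at hle
  exact hle.not_gt hlt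

theorem one_sub_pow_le_exp_neg_mul {ε p : ℝ} (n : ℕ) (hεp : ε ≤ p) (hp : p ≤ 1) :
    (1 - p) ^ n ≤ exp (-(ε * n)) :=
  calc (1 - p) ^ n ≤ exp (-ε) ^ n :=
        pow_le_pow_left₀ (by linarith) (by linarith [add_one_le_exp (-ε)]) n
    _ = exp (-(ε * n)) := by rw [← exp_nat_mul]; ring_nf

theorem exp_lt_rpow_div_of_three_mul_exp_le {x C μ : ℝ} (hC : 1 ≤ C)
    (hμ : 3 * exp (x / C) ≤ μ) : exp x < μ ^ C / C := by
  have hC0 : 0 < C := one_pos.trans_le hC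
  -- Bernoulli's inequality: `1 + 2C ≤ 3^C`.
  have h3C : C < 3 ^ C := by
    have := one_add_mul_self_le_rpow_one_add (by norm_num : (-1 : ℝ) ≤ 2) hC
    norm_num at this
    linarith
  calc exp x = C * exp x / C := by field_simp
    _ < 3 ^ C * exp x / C := by gcongr
    _ = (3 * exp (x / C)) ^ C / C := by
        rw [mul_rpow (by norm_num) (exp_pos _).le, ← exp_mul, div_mul_cancel₀ _ hC0.ne']
    _ ≤ μ ^ C / C := by gcongr

section QuestionSet

variable {r : ℕ} {Q : Fin r → Type} [∀ j, Fintype (Q j)] [∀ j, DecidableEq (Q j)]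
  {Qbar : Finset (∀ j, Q j)} {n : ℕ}

theorem id_mem_homFinset : (fun _ => id) ∈ homFinset Qbar := by
  simp [homFinset]

theorem goodFor_of_mem_piFinset_homFinset {S : Finset (Fin n → ∀ j, Q j)}
    {F : Fin n → ∀ j, Q j → Q j} (hF : F ∈ Fintype.piFinset fun _ => homFinset Qbar)
    (hid : ∃ i, F i = fun _ => id) (hS : ∀ q ∈ Qbar, (fun i j => F i j (q j)) ∈ S) :
    GoodFor Qbar S F :=
  ⟨fun i => by simpa [homFinset, QHom] using Fintype.mem_piFinset.1 hF i,
    hid.imp fun _ h _ => by rw [h], hS⟩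

theorem IsGood.nonneg {ε : ℝ} (hne : Qbar.Nonempty) (h : IsGood Qbar n ε) : 0 ≤ ε := by
  by_contra! hε
  obtain ⟨f, -, -, hf⟩ := h ∅ (empty_subset _) (by simpa using hε.le)
  obtain ⟨q, hq⟩ := hne
  simpa using hf q hq

theorem omegaGood_le_of_isGood {δ : ℝ} (hne : Qbar.Nonempty) (h : IsGood Qbar n δ) :
    omegaGood Qbar n ≤ δ :=
  csInf_le ⟨0, fun _ hε => hε.nonneg hne⟩ h

end QuestionSet

theorem statement10_general (r : ℕ) (Q : Fin r → Type) [∀ j, Fintype (Q j)]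
    [∀ j, DecidableEq (Q j)] (Qbar : Finset (∀ j, Q j)) (hne : Qbar.Nonempty)
    (C ε : ℝ) (hC : 1 ≤ C)
    (H : (∀ j, Q j → Q j) → ℝ)
    (hH0 : ∀ f, 0 ≤ H f)
    (hHsum : ∑ f ∈ homFinset Qbar, H f = 1)
    (hHid : ε ≤ H (fun _ => id))
    (hhit : ∀ (n : ℕ) (S : Finset (Fin n → ∀ j, Q j)),
      S ⊆ Fintype.piFinset (fun _ => Qbar) →
      ((S.card : ℝ) / (Qbar.card : ℝ) ^ n) ^ C / C ≤
        ∑ F ∈ (Fintype.piFinset fun _ : Fin n => homFinset Qbar).filter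
            (fun F => ∀ q ∈ Qbar, (fun i j => F i j (q j)) ∈ S),
          ∏ i, H (F i))
    (n : ℕ) :
    omegaGood Qbar n ≤ 3 * Real.exp (-(ε * n) / C) := by
  have hid := id_mem_homFinset (Qbar := Qbar)
  have hHid_le_one : H (fun _ => id) ≤ 1 := hHsum ▸ single_le_sum (fun f _ => hH0 f) hid
  refine omegaGood_le_of_isGood hne fun S hS hμ => ?_
  have hlt := (one_sub_pow_le_exp_neg_mul n hHid hHid_le_one).trans_lt
    ((exp_lt_rpow_div_of_three_mul_exp_le hC hμ).trans_le (hhit n S hS))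
  obtain ⟨F, hF, hFid⟩ :=
    exists_mem_exists_eq_of_one_sub_pow_lt (fun f _ => hH0 f) hHsum hid (filter_subset _ _) hlt
  rw [mem_filter] at hF
  exact ⟨F, goodFor_of_mem_piFinset_homFinset hF.1 hFid hF.2⟩

/-- Probabilistic method for goodness: if `H` is a probability distribution over
`Hom(Q̄,Q̄)` with `H(Id) ≥ ε` that is polynomially same-set hitting with constant
`C ≥ 1` (for every `n` and every `S ⊆ Q̄ⁿ`, an i.i.d. `H`-vector of homomorphisms maps
all hyperedges simultaneously into `S` with probability at least `μ(S)^C / C`),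
then `ω^good_Q̄(n) ≤ 3·exp(-εn/C)` for every `n`. -/
theorem statement10 (r : ℕ) (Q : Fin r → Type) [∀ j, Fintype (Q j)]
    [∀ j, DecidableEq (Q j)] (Qbar : Finset (∀ j, Q j)) (hne : Qbar.Nonempty)
    (hcov : ∀ (j : Fin r) (x : Q j), ∃ q ∈ Qbar, q j = x)
    (C ε : ℝ) (hC : 1 ≤ C) (hε : 0 < ε)
    (H : (∀ j, Q j → Q j) → ℝ)
    (hH0 : ∀ f, 0 ≤ H f)
    (hHsupp : ∀ f ∉ homFinset Qbar, H f = 0)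
    (hHsum : ∑ f ∈ homFinset Qbar, H f = 1)
    (hHid : ε ≤ H (fun _ => id))
    (hhit : ∀ (n : ℕ) (S : Finset (Fin n → ∀ j, Q j)),
      S ⊆ Fintype.piFinset (fun _ => Qbar) →
      ((S.card : ℝ) / (Qbar.card : ℝ) ^ n) ^ C / C ≤
        ∑ F ∈ (Fintype.piFinset fun _ : Fin n => homFinset Qbar).filter
            (fun F => ∀ q ∈ Qbar, (fun i j => F i j (q j)) ∈ S),
          ∏ i, H (F i))
    (n : ℕ) :
    omegaGood Qbar n ≤ 3 * Real.exp (-(ε * n) / C) :=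
  statement10_general r Q Qbar hne C ε hC H hH0 hHsum hHid hhit n
end

section
/- For every k ≥ 1, the set graph 𝔖_k is constructible by conditioning using 2(k−1) doublings. -/
/-!
`𝔖_1` is a single edge, and `𝔖_{n+2}` arises from `𝔖_{n+1}` by two doublings and a collapse.
First double every set, keeping all elements fixed: each set `S` gets a twin `S'`. Then double
the element `0` together with all twins `S'`: this creates `0*` and sets `S''`, with new edges
`0*S` and `0*S''` for `0 ∈ S`, and `xS''` for `x ∈ S \ {0}`. The homomorphism sending the sets
`S` and `S''` with `0 ∉ S` to `S'` collapses this graph onto a copy of `𝔖_{n+2}` in which `0*` is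
the new element: `S' ↦ S`, `S ↦ S ∪ {0*}` and `S'' ↦ (S \ {0}) ∪ {0*}` for `0 ∈ S`.
-/

/-- The class of bipartite graphs (presented by part types `X`, `Y`, vertex sets
`vx ⊆ X`, `vy ⊆ Y`, and an edge set `E ⊆ X × Y`) that are constructible by
conditioning, together with the number of doubling steps used.

* `single`: a single edge is constructible (0 doublings);
* `double`: doubling the old vertices `ox ⊆ vx`, `oy ⊆ vy` (the remaining vertices
  being fixed) adds a fresh copy of every old vertex, and for every edge that is not
  entirely fixed, a new edge in which every old endpoint is replaced by its copy;
* `collapse`: if some homomorphism of the graph into the induced subgraph on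
  `px ⊆ vx`, `py ⊆ vy` is the identity on `px ∪ py`, then that induced subgraph
  is constructible;
* `iso`: the class is closed under isomorphic re-presentation of a graph
  (injectively re-embedding the two parts). -/
inductive ConstructibleBip :
    ∀ (X Y : Type), Set X → Set Y → Set (X × Y) → ℕ → Prop where
  | single (X Y : Type) (x : X) (y : Y) :
      ConstructibleBip X Y {x} {y} {(x, y)} 0
  | double (X Y : Type) (vx : Set X) (vy : Set Y) (E : Set (X × Y))
      (ox : Set X) (oy : Set Y) (k : ℕ)
      (hox : ox ⊆ vx) (hoy : oy ⊆ vy)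
      (h : ConstructibleBip X Y vx vy E k) :
      ConstructibleBip (X ⊕ X) (Y ⊕ Y)
        (Sum.inl '' vx ∪ Sum.inr '' ox) (Sum.inl '' vy ∪ Sum.inr '' oy)
        ({ e' | ∃ e ∈ E, e' = (Sum.inl e.1, Sum.inl e.2) } ∪
         { e' | ∃ e ∈ E, (e.1 ∈ ox ∨ e.2 ∈ oy) ∧
            ((e.1 ∈ ox ∧ e'.1 = Sum.inr e.1) ∨ (e.1 ∉ ox ∧ e'.1 = Sum.inl e.1)) ∧
            ((e.2 ∈ oy ∧ e'.2 = Sum.inr e.2) ∨ (e.2 ∉ oy ∧ e'.2 = Sum.inl e.2)) })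
        (k + 1)
  | collapse (X Y : Type) (vx px : Set X) (vy py : Set Y) (E : Set (X × Y)) (k : ℕ)
      (fx : X → X) (fy : Y → Y)
      (hpx : px ⊆ vx) (hpy : py ⊆ vy)
      (hhom : ∀ e ∈ E, (fx e.1, fy e.2) ∈ { e ∈ E | e.1 ∈ px ∧ e.2 ∈ py })
      (hfixx : ∀ v ∈ px, fx v = v) (hfixy : ∀ v ∈ py, fy v = v)
      (h : ConstructibleBip X Y vx vy E k) :
      ConstructibleBip X Y px py { e ∈ E | e.1 ∈ px ∧ e.2 ∈ py } k
  | iso (X Y X' Y' : Type) (vx : Set X) (vy : Set Y) (E : Set (X × Y)) (k : ℕ)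
      (φx : X → X') (φy : Y → Y')
      (hinjx : Set.InjOn φx vx) (hinjy : Set.InjOn φy vy)
      (h : ConstructibleBip X Y vx vy E k) :
      ConstructibleBip X' Y' (φx '' vx) (φy '' vy)
        { e' | ∃ e ∈ E, e' = (φx e.1, φy e.2) } k

/-- The set graph `𝔖_k`: parts `[k]` and the nonempty subsets of `[k]`, with an edge
`(x, S)` iff `x ∈ S`. -/
def setGraphEdges (k : ℕ) : Finset (Fin k × {S : Finset (Fin k) // S.Nonempty}) :=
  Finset.univ.filter fun p => p.1 ∈ p.2.1

open Set Sum

section Doubling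

variable {X Y X' Y' : Type} {vx : Set X} {vy : Set Y} {E : Set (X × Y)} {k : ℕ}

def doubleEdges (E : Set (X × Y)) (ox : Set X) (oy : Set Y) : Set ((X ⊕ X) × (Y ⊕ Y)) :=
  { e' | ∃ e ∈ E, e' = (inl e.1, inl e.2) } ∪
    { e' | ∃ e ∈ E, (e.1 ∈ ox ∨ e.2 ∈ oy) ∧
      ((e.1 ∈ ox ∧ e'.1 = inr e.1) ∨ (e.1 ∉ ox ∧ e'.1 = inl e.1)) ∧
      ((e.2 ∈ oy ∧ e'.2 = inr e.2) ∨ (e.2 ∉ oy ∧ e'.2 = inl e.2)) }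

variable {ox : Set X} {oy : Set Y} {a : X} {b : Y}

@[simp]
theorem inl_inl_mem_doubleEdges : (inl a, inl b) ∈ doubleEdges E ox oy ↔ (a, b) ∈ E := by
  simp [doubleEdges]; aesop

@[simp]
theorem inl_inr_mem_doubleEdges :
    (inl a, inr b) ∈ doubleEdges E ox oy ↔ (a, b) ∈ E ∧ a ∉ ox ∧ b ∈ oy := by
  simp [doubleEdges]; aesop

@[simp]
theorem inr_inl_mem_doubleEdges :
    (inr a, inl b) ∈ doubleEdges E ox oy ↔ (a, b) ∈ E ∧ a ∈ ox ∧ b ∉ oy := by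
  simp [doubleEdges]; aesop

@[simp]
theorem inr_inr_mem_doubleEdges :
    (inr a, inr b) ∈ doubleEdges E ox oy ↔ (a, b) ∈ E ∧ a ∈ ox ∧ b ∈ oy := by
  simp [doubleEdges]; aesop

namespace ConstructibleBip

theorem doubling (h : ConstructibleBip X Y vx vy E k) (hox : ox ⊆ vx) (hoy : oy ⊆ vy) :
    ConstructibleBip (X ⊕ X) (Y ⊕ Y) (inl '' vx ∪ inr '' ox) (inl '' vy ∪ inr '' oy)
      (doubleEdges E ox oy) (k + 1) :=
  .double X Y vx vy E ox oy k hox hoy h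

theorem edges_subset (h : ConstructibleBip X Y vx vy E k) : E ⊆ vx ×ˢ vy := by
  induction h with
  | single => simp
  | double X Y vx vy E ox oy k hox hoy _ ih =>
    rintro e (he : e ∈ doubleEdges E ox oy)
    rcases e with ⟨a | a, b | b⟩ <;>
      simp only [inl_inl_mem_doubleEdges, inl_inr_mem_doubleEdges, inr_inl_mem_doubleEdges,
        inr_inr_mem_doubleEdges] at he <;>
      have := ih (show (a, b) ∈ E by tauto) <;> simp_all
  | collapse => intro e he; exact ⟨he.2.1, he.2.2⟩
  | iso X Y X' Y' vx vy E k φx φy _ _ _ ih =>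
    rintro _ ⟨e, he, rfl⟩
    exact ⟨mem_image_of_mem φx (ih he).1, mem_image_of_mem φy (ih he).2⟩

theorem of_bijOn {vx' : Set X'} {vy' : Set Y'} {E' : Set (X' × Y')}
    {φx : X → X'} {φy : Y → Y'} (h : ConstructibleBip X Y vx vy E k)
    (hx : BijOn φx vx vx') (hy : BijOn φy vy vy') (hE' : E' ⊆ vx' ×ˢ vy')
    (hmem : ∀ a ∈ vx, ∀ b ∈ vy, (φx a, φy b) ∈ E' ↔ (a, b) ∈ E) :
    ConstructibleBip X' Y' vx' vy' E' k := by
  have h' := ConstructibleBip.iso X Y X' Y' vx vy E k φx φy hx.injOn hy.injOn h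
  rw [hx.image_eq, hy.image_eq] at h'
  convert h' using 1
  ext ⟨a', b'⟩
  constructor
  · intro he'
    obtain ⟨a, ha, rfl⟩ := hx.surjOn (hE' he').1
    obtain ⟨b, hb, rfl⟩ := hy.surjOn (hE' he').2
    exact ⟨(a, b), (hmem a ha b hb).1 he', rfl⟩
  · rintro ⟨⟨a, b⟩, he, heq⟩
    obtain ⟨ha, hb⟩ := h.edges_subset he
    exact heq ▸ (hmem a ha b hb).2 he

end ConstructibleBip

end Doubling

abbrev NonemptyFinset (n : ℕ) : Type := {S : Finset (Fin n) // S.Nonempty}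

@[simp]
theorem mem_setGraphEdges {n : ℕ} {x : Fin n} {S : NonemptyFinset n} :
    (x, S) ∈ setGraphEdges n ↔ x ∈ S.1 := by
  simp [setGraphEdges]

theorem constructibleBip_setGraph_one :
    ConstructibleBip (Fin 1) (NonemptyFinset 1) univ univ (setGraphEdges 1) 0 := by
  refine (ConstructibleBip.single Unit Unit () ()).of_bijOn (φx := fun _ => 0)
    (φy := fun _ => ⟨Finset.univ, Finset.univ_nonempty⟩) ?_ ?_ (by simp) ?_
  · exact ⟨mapsTo_univ _ _, injOn_singleton _ _,
      fun x _ => ⟨(), rfl, Subsingleton.elim _ _⟩⟩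
  · exact ⟨mapsTo_univ _ _, injOn_singleton _ _,
      fun S _ => ⟨(), rfl, Subtype.ext S.2.eq_univ.symm⟩⟩
  · simp [setGraphEdges]

namespace Finset

variable {n : ℕ}

def restrictCastSucc (T : Finset (Fin (n + 1))) : Finset (Fin n) :=
  univ.filter fun x => x.castSucc ∈ T

def insertLast (S : Finset (Fin n)) : Finset (Fin (n + 1)) :=
  insert (Fin.last n) (S.map Fin.castSuccEmb)

@[simp]
theorem mem_restrictCastSucc {T : Finset (Fin (n + 1))} {x : Fin n} :
    x ∈ T.restrictCastSucc ↔ x.castSucc ∈ T := by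
  simp [restrictCastSucc]

@[simp]
theorem castSucc_mem_insertLast {S : Finset (Fin n)} {x : Fin n} :
    x.castSucc ∈ S.insertLast ↔ x ∈ S := by
  simp [insertLast]

@[simp]
theorem last_mem_insertLast (S : Finset (Fin n)) : Fin.last n ∈ S.insertLast := by
  simp [insertLast]

theorem insertLast_restrictCastSucc {T : Finset (Fin (n + 1))} (hT : Fin.last n ∈ T) :
    T.restrictCastSucc.insertLast = T := by
  ext u
  induction u using Fin.lastCases <;> simp [hT]

theorem map_castSuccEmb_restrictCastSucc {T : Finset (Fin (n + 1))} (hT : Fin.last n ∉ T) :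
    T.restrictCastSucc.map Fin.castSuccEmb = T := by
  ext u
  induction u using Fin.lastCases <;> simp [hT]

@[simp]
theorem insertLast_inj {S S' : Finset (Fin n)} : S.insertLast = S'.insertLast ↔ S = S' := by
  refine ⟨fun h => ?_, congrArg _⟩
  ext x
  rw [← castSucc_mem_insertLast, h, castSucc_mem_insertLast]

@[simp]
theorem insertLast_ne_map_castSuccEmb (S T : Finset (Fin n)) :
    S.insertLast ≠ T.map Fin.castSuccEmb :=
  fun h => by simpa [h] using last_mem_insertLast S

end Finset

/- One step `𝔖_{n+1} ↝ 𝔖_{n+2}`. In the twice doubled graph, `inl (inl S)`, `inl (inr S)` and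
`inr (inr S)` are the copies `S`, `S'`, `S''` of a set `S`, and `inr (inl 0)` is the copy `0*`
of the element `0`; the other terms of `Elts n` and `Sets n` are not vertices. -/
namespace SetGraphStep

variable (n : ℕ)

abbrev Elts : Type := (Fin (n + 1) ⊕ Fin (n + 1)) ⊕ (Fin (n + 1) ⊕ Fin (n + 1))

abbrev Sets : Type := (NonemptyFinset (n + 1) ⊕ NonemptyFinset (n + 1)) ⊕
  (NonemptyFinset (n + 1) ⊕ NonemptyFinset (n + 1))

def edges : Set (Elts n × Sets n) :=
  doubleEdges (doubleEdges (setGraphEdges (n + 1)) ∅ univ) {inl 0} (range inr)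

def elts : Set (Elts n) := inl '' (inl '' univ ∪ inr '' ∅) ∪ inr '' {inl 0}

def keptSets : Set (Sets n) := {b | match b with
  | inl (inl S) => 0 ∈ S.1
  | inl (inr _) => True
  | inr (inl _) => False
  | inr (inr S) => 0 ∈ S.1}

def retract : Sets n → Sets n
  | inl (inl S) => if 0 ∈ S.1 then inl (inl S) else inl (inr S)
  | inl (inr S) => inl (inr S)
  | inr (inl S) => inl (inr S)
  | inr (inr S) => if 0 ∈ S.1 then inr (inr S) else inl (inr S)

def eltsEmb : Elts n → Fin (n + 2)
  | inl (inl x) => x.castSucc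
  | inl (inr x) => x.castSucc
  | inr _ => Fin.last (n + 1)

def setsEmb : Sets n → NonemptyFinset (n + 2)
  | inl (inl S) => ⟨S.1.insertLast, Finset.insert_nonempty _ _⟩
  | inl (inr S) => ⟨S.1.map Fin.castSuccEmb, S.2.map⟩
  | inr (inl S) => ⟨S.1.insertLast, Finset.insert_nonempty _ _⟩
  | inr (inr S) => ⟨(S.1.erase 0).insertLast, Finset.insert_nonempty _ _⟩

variable {n}

theorem retract_mem_edges {a : Elts n} {b : Sets n} (h : (a, b) ∈ edges n) :
    (a, retract n b) ∈ edges n ∧ retract n b ∈ keptSets n := by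
  rcases a with (x | x) | (x | x) <;> rcases b with (S | S) | (S | S) <;>
    by_cases h0 : 0 ∈ S.1 <;> simp_all [retract, edges, keptSets] <;> aesop

theorem keptSets_subset :
    keptSets n ⊆ inl '' (inl '' univ ∪ inr '' univ) ∪ inr '' range inr := by
  rintro ((S | S) | (S | S)) hS <;> simp_all [keptSets]

theorem retract_eq_self {b : Sets n} (hb : b ∈ keptSets n) : retract n b = b := by
  rcases b with (S | S) | (S | S) <;> simp_all [keptSets, retract]

theorem bijOn_eltsEmb : BijOn (eltsEmb n) (elts n) univ := by
  refine ⟨mapsTo_univ _ _, ?_, ?_⟩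
  · rintro ((x | x) | (x | x)) hx ((y | y) | (y | y)) hy hxy <;>
      simp_all [elts, eltsEmb, (Fin.castSucc_ne_last _).symm]
  · intro u _
    induction u using Fin.lastCases with
    | last => exact ⟨inr (inl 0), by simp [elts], rfl⟩
    | cast x => exact ⟨inl (inl x), by simp [elts], rfl⟩

theorem bijOn_setsEmb : BijOn (setsEmb n) (keptSets n) univ := by
  refine ⟨mapsTo_univ _ _, ?_, ?_⟩
  · rintro ((S | S) | (S | S)) hS ((T | T) | (T | T)) hT hST <;>
      simp_all [keptSets, setsEmb, Subtype.ext_iff, (Finset.insertLast_ne_map_castSuccEmb _ _).symm]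
    · exact Finset.notMem_erase 0 S.1 (hST ▸ hT)
    · exact Finset.erase_injOn' 0 hS hT hST
  · intro T _
    by_cases hl : Fin.last (n + 1) ∈ T.1
    · by_cases h0 : (0 : Fin (n + 1)).castSucc ∈ T.1
      · exact ⟨inl (inl ⟨T.1.restrictCastSucc, 0, by simpa⟩), by simpa [keptSets],
          Subtype.ext (Finset.insertLast_restrictCastSucc hl)⟩
      · have h0' : 0 ∉ T.1.restrictCastSucc := by simpa using h0
        refine ⟨inr (inr ⟨insert 0 T.1.restrictCastSucc, Finset.insert_nonempty _ _⟩),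
          by simp [keptSets], Subtype.ext ?_⟩
        simp [setsEmb, Finset.erase_insert h0', Finset.insertLast_restrictCastSucc hl]
    · have hne := Finset.map_castSuccEmb_restrictCastSucc hl ▸ T.2
      exact ⟨inl (inr ⟨T.1.restrictCastSucc, Finset.map_nonempty.1 hne⟩), trivial,
        Subtype.ext (Finset.map_castSuccEmb_restrictCastSucc hl)⟩

theorem eltsEmb_mem_setsEmb_iff {a : Elts n} (ha : a ∈ elts n) {b : Sets n}
    (hb : b ∈ keptSets n) :
    eltsEmb n a ∈ (setsEmb n b).1 ↔ (a, b) ∈ edges n := by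
  rcases a with (x | x) | (x | x) <;> rcases b with (S | S) | (S | S) <;>
    simp_all [elts, keptSets, edges, eltsEmb, setsEmb, and_comm]

end SetGraphStep

theorem ConstructibleBip.setGraph_succ {n m : ℕ}
    (h : ConstructibleBip (Fin (n + 1)) (NonemptyFinset (n + 1)) univ univ
      (setGraphEdges (n + 1)) m) :
    ConstructibleBip (Fin (n + 2)) (NonemptyFinset (n + 2)) univ univ
      (setGraphEdges (n + 2)) (m + 2) := by
  open SetGraphStep in
  have hdouble := (h.doubling (ox := ∅) (oy := univ) (empty_subset _) subset_rfl).doubling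
    (ox := {inl 0}) (oy := range inr) (by simp) (by simp)
  have hcollapse := ConstructibleBip.collapse _ _ _ (elts n) _ (keptSets n) _ _ id (retract n)
    subset_rfl keptSets_subset
    (fun _ he => ⟨(retract_mem_edges he).1, (hdouble.edges_subset he).1,
      (retract_mem_edges he).2⟩)
    (fun _ _ => rfl) (fun _ => retract_eq_self) hdouble
  exact hcollapse.of_bijOn bijOn_eltsEmb bijOn_setsEmb (by simp)
    fun a ha b hb => by simpa [ha, hb] using eltsEmb_mem_setsEmb_iff ha hb

theorem constructibleBip_setGraph (n : ℕ) :
    ConstructibleBip (Fin (n + 1)) (NonemptyFinset (n + 1)) univ univ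
      (setGraphEdges (n + 1)) (2 * n) := by
  induction n with
  | zero => exact constructibleBip_setGraph_one
  | succ n ih => exact ih.setGraph_succ

/-- For every `k ≥ 1`, the set graph `𝔖_k` is constructible by conditioning using
`2(k-1)` doublings. -/
theorem statement15 (k : ℕ) (hk : 1 ≤ k) :
    ConstructibleBip (Fin k) {S : Finset (Fin k) // S.Nonempty} Set.univ Set.univ
      (↑(setGraphEdges k) : Set (Fin k × {S : Finset (Fin k) // S.Nonempty}))
      (2 * (k - 1)) := by
  obtain ⟨n, rfl⟩ := Nat.exists_eq_add_of_le' hk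
  simpa using constructibleBip_setGraph n
end
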